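/- arXiv:1804.06283 — 4 statements merged into one kernel-verified Lean document; each statement's English description precedes it below -/
import Mathlib

section
/- Let α, K > 0 and β, f ∈ ℝ. Define G : ℝ × ℝ → ℝ by G(u,v) = (α/2)(u² - β + v)² + (K/2)u² - f·u. Then for any v₁*, v₀* ∈ ℝ with 2v₀* + K > 0, the partial conjugate sup over (u,v) ∈ ℝ² of (u·v₁* + v·v₀* - G(u,v)) equals (v₁* + f)²/(2(2v₀* + K)) + (v₀*)²/(2α) + β·v₀*. -/
/-- The partial Legendre transform of the scalar Ginzburg–Landau local potential
`G(u,v) = (α/2)(u² - β + v)² + (K/2)u² - f·u`: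
for `2v₀* + K > 0`,
`sup_{(u,v)} (u v₁* + v v₀* - G(u,v)) = (v₁*+f)²/(2(2v₀*+K)) + (v₀*)²/(2α) + β v₀*`. -/
theorem partial_conjugate_GL_scalar (α K β f v₁s v₀s : ℝ)
    (hα : 0 < α) (hK : 0 < K) (h : 0 < 2 * v₀s + K) :
    IsLUB
      (Set.range fun p : ℝ × ℝ =>
        p.1 * v₁s + p.2 * v₀s -
          ((α / 2) * (p.1 ^ 2 - β + p.2) ^ 2 + (K / 2) * p.1 ^ 2 - f * p.1))
      ((v₁s + f) ^ 2 / (2 * (2 * v₀s + K)) + v₀s ^ 2 / (2 * α) + β * v₀s) := by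
  have hc : (2 * v₀s + K) ≠ 0 := ne_of_gt h
  have ha : α ≠ 0 := ne_of_gt hα
  constructor
  · rintro x ⟨⟨u, v⟩, rfl⟩
    simp only
    have key : ((v₁s + f) ^ 2 / (2 * (2 * v₀s + K)) + v₀s ^ 2 / (2 * α) + β * v₀s)
        - (u * v₁s + v * v₀s -
          ((α / 2) * (u ^ 2 - β + v) ^ 2 + (K / 2) * u ^ 2 - f * u))
        = (α / 2) * ((u ^ 2 - β + v) - v₀s / α) ^ 2
          + ((2 * v₀s + K) / 2) * (u - (v₁s + f) / (2 * v₀s + K)) ^ 2 := by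
      field_simp
      ring
    nlinarith [sq_nonneg ((u ^ 2 - β + v) - v₀s / α),
      sq_nonneg (u - (v₁s + f) / (2 * v₀s + K)), hα.le, h.le]
  · intro b hb
    exact hb ⟨((v₁s + f) / (2 * v₀s + K),
      v₀s / α - ((v₁s + f) / (2 * v₀s + K)) ^ 2 + β), by field_simp; ring⟩
end

section
/- Let α, β, K > 0, f ∈ ℝⁿ, let L be a symmetric n×n matrix with K·I + L positive definite, and let u₀ be a critical point of J(u) = -(1/2)⟨u, Lu⟩ + (α/2)∑ᵢ(uᵢ² - β)² - ⟨u,f⟩. With v̂₀* = α(u₀⊙u₀ - β𝟙), v̂₁* = (2v̂₀* + K𝟙)⊙u₀ - f, assuming 2(v̂₀*)ᵢ + K > 0 for all i, define the dual functional J*(v₁*, v₀*) = -(1/2)∑ᵢ (v₁*ᵢ + fᵢ)²/(2v₀*ᵢ + K) - (1/(2α))∑ᵢ (v₀*ᵢ)² - β∑ᵢ v₀*ᵢ + (1/2)⟨v₁*, (K·I + L)⁻¹ v₁*⟩. Then J*(v̂₁*, v̂₀*) = J(u₀) (zero duality gap at the critical point). -/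
open Matrix

/-!
At a critical point `u₀` the equation `L u₀ = 2 v̂₀* ⊙ u₀ - f` says exactly that
`(K I + L) u₀ = v̂₁*`, so the quadratic term of `J*` becomes `(1/2)⟨v̂₁*, u₀⟩`, and
`v̂₁* + f = (2 v̂₀* + K) ⊙ u₀` turns the first term into `-(1/2)∑(2 v̂₀*ᵢ + K) u₀ᵢ²`.
What is left is a coordinatewise identity: `v̂₀*ᵢ` is the Legendre dual variable of
`(α/2)(u₀ᵢ² - β)²` with respect to `u₀ᵢ²`.
-/

theorem sq_mul_div_self {G₀ : Type*} [CommGroupWithZero G₀] (a x : G₀) :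
    (a * x) ^ 2 / a = a * x ^ 2 := by
  rw [mul_pow, div_sq_cancel]

theorem ginzburgLandau_dual_summand_eq {𝕜 : Type*} [Field 𝕜] [NeZero (2 : 𝕜)]
    {α β K u f v₀ v₁ : 𝕜}
    (hv₀ : v₀ = α * (u ^ 2 - β)) (hv₁ : v₁ = (2 * v₀ + K) * u - f) :
    -(1 / 2) * ((v₁ + f) ^ 2 / (2 * v₀ + K)) - 1 / (2 * α) * v₀ ^ 2 - β * v₀ + 1 / 2 * (v₁ * u)
      = -(1 / 2) * (u * (2 * v₀ * u - f)) + α / 2 * (u ^ 2 - β) ^ 2 - u * f := by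
  rw [hv₁, sub_add_cancel, sq_mul_div_self, hv₀]
  obtain rfl | hα := eq_or_ne α 0
  · simp only [mul_zero, div_zero, zero_mul, sub_zero, zero_div, add_zero]
    field_simp
    ring
  · field_simp
    ring

theorem zero_duality_gap_at_critical_point_general (n : ℕ) (α β K : ℝ)
    (f u₀ : Fin n → ℝ) (L : Matrix (Fin n) (Fin n) ℝ)
    (hpos : (K • (1 : Matrix (Fin n) (Fin n) ℝ) + L).PosDef)
    (J : (Fin n → ℝ) → ℝ)
    (hJ : ∀ u, J u = -(1 / 2) * (u ⬝ᵥ L.mulVec u)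
        + (α / 2) * ∑ i, ((u i) ^ 2 - β) ^ 2 - u ⬝ᵥ f)
    (hcrit : ∀ i, -(L.mulVec u₀) i + 2 * α * ((u₀ i) ^ 2 - β) * u₀ i - f i = 0)
    (v₀h v₁h : Fin n → ℝ)
    (hv₀ : ∀ i, v₀h i = α * ((u₀ i) ^ 2 - β))
    (hv₁ : ∀ i, v₁h i = (2 * v₀h i + K) * u₀ i - f i)
    (Jstar : (Fin n → ℝ) → (Fin n → ℝ) → ℝ)
    (hJstar : ∀ v₁ v₀, Jstar v₁ v₀ =
        -(1 / 2) * ∑ i, (v₁ i + f i) ^ 2 / (2 * v₀ i + K)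
        - (1 / (2 * α)) * ∑ i, (v₀ i) ^ 2 - β * ∑ i, v₀ i
        + (1 / 2) * (v₁ ⬝ᵥ (K • (1 : Matrix (Fin n) (Fin n) ℝ) + L)⁻¹.mulVec v₁)) :
    Jstar v₁h v₀h = J u₀ := by
  have hLu : ∀ i, L.mulVec u₀ i = 2 * v₀h i * u₀ i - f i := fun i => by
    rw [hv₀]
    linarith [hcrit i]
  have hMu : (K • (1 : Matrix (Fin n) (Fin n) ℝ) + L).mulVec u₀ = v₁h := by
    ext i
    rw [add_mulVec, smul_mulVec, one_mulVec, Pi.add_apply, Pi.smul_apply, hLu, hv₁, smul_eq_mul]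
    ring
  have := hpos.isUnit.invertible
  rw [hJstar, hJ, inv_mulVec_eq_vec hMu.symm]
  simp only [dotProduct, Finset.mul_sum, ← Finset.sum_add_distrib, ← Finset.sum_sub_distrib]
  refine Finset.sum_congr rfl fun i _ => ?_
  rw [hLu]
  exact ginzburgLandau_dual_summand_eq (hv₀ i) (hv₁ i)

/-- Zero duality gap at a critical point: with the dual variables
`v̂₀* = α(u₀⊙u₀ - β𝟙)`, `v̂₁* = (2v̂₀* + K𝟙)⊙u₀ - f`, the dual functional
`J*(v₁*,v₀*) = -(1/2)∑(v₁*ᵢ+fᵢ)²/(2v₀*ᵢ+K) - (1/(2α))∑(v₀*ᵢ)² - β∑v₀*ᵢ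
 + (1/2)⟨v₁*,(KI+L)⁻¹v₁*⟩` satisfies `J*(v̂₁*,v̂₀*) = J(u₀)`. -/
theorem zero_duality_gap_at_critical_point (n : ℕ) (α β K : ℝ)
    (hα : 0 < α) (hβ : 0 < β) (hK : 0 < K)
    (f u₀ : Fin n → ℝ) (L : Matrix (Fin n) (Fin n) ℝ) (hL : L.IsSymm)
    (hpos : (K • (1 : Matrix (Fin n) (Fin n) ℝ) + L).PosDef)
    (J : (Fin n → ℝ) → ℝ)
    (hJ : ∀ u, J u = -(1 / 2) * (u ⬝ᵥ L.mulVec u)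
        + (α / 2) * ∑ i, ((u i) ^ 2 - β) ^ 2 - u ⬝ᵥ f)
    (hcrit : ∀ i, -(L.mulVec u₀) i + 2 * α * ((u₀ i) ^ 2 - β) * u₀ i - f i = 0)
    (v₀h v₁h : Fin n → ℝ)
    (hv₀ : ∀ i, v₀h i = α * ((u₀ i) ^ 2 - β))
    (hv₁ : ∀ i, v₁h i = (2 * v₀h i + K) * u₀ i - f i)
    (hA : ∀ i, 0 < 2 * v₀h i + K)
    (Jstar : (Fin n → ℝ) → (Fin n → ℝ) → ℝ)
    (hJstar : ∀ v₁ v₀, Jstar v₁ v₀ =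
        -(1 / 2) * ∑ i, (v₁ i + f i) ^ 2 / (2 * v₀ i + K)
        - (1 / (2 * α)) * ∑ i, (v₀ i) ^ 2 - β * ∑ i, v₀ i
        + (1 / 2) * (v₁ ⬝ᵥ (K • (1 : Matrix (Fin n) (Fin n) ℝ) + L)⁻¹.mulVec v₁)) :
    Jstar v₁h v₀h = J u₀ :=
  zero_duality_gap_at_critical_point_general n α β K f u₀ L hpos J hJ hcrit v₀h v₁h hv₀ hv₁ Jstar
    hJstar
end

section
/- Let α, β, K > 0, f ∈ ℝⁿ, L symmetric with K·I + L positive definite, and u₀ a critical point of J(u) = -(1/2)⟨u,Lu⟩ + (α/2)∑ᵢ(uᵢ² - β)² - ⟨u,f⟩, with v̂₀* = α(u₀⊙u₀ - β𝟙), v̂₁* = (2v̂₀* + K𝟙)⊙u₀ - f, and 2(v̂₀*)ᵢ + K > 0 for all i. If moreover -L + K·I + 2·diag(v̂₀*) - K·I = -L + 2·diag(v̂₀*) is positive definite (i.e. -γ∇² + 2v̂₀* > 0), then the Hessian of J at u₀, namely -L + diag(6αu₀ᵢ² - 2αβ), is positive definite. -/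
open Matrix

/-- If `-L + 2·diag(v̂₀*)` is positive definite at a critical point `u₀` (with
`v̂₀* = α(u₀⊙u₀ - β𝟙)`), then the Hessian `-L + diag(6αu₀ᵢ² - 2αβ)` of the
Ginzburg–Landau functional at `u₀` is positive definite. -/
theorem primal_hessian_posdef_of_dual_condition (n : ℕ) (α β K : ℝ)
    (hα : 0 < α) (hβ : 0 < β) (hK : 0 < K)
    (f u₀ : Fin n → ℝ) (L : Matrix (Fin n) (Fin n) ℝ) (hL : L.IsSymm)
    (hpos : (K • (1 : Matrix (Fin n) (Fin n) ℝ) + L).PosDef)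
    (hcrit : ∀ i, -(L.mulVec u₀) i + 2 * α * ((u₀ i) ^ 2 - β) * u₀ i - f i = 0)
    (v₀h v₁h : Fin n → ℝ)
    (hv₀ : ∀ i, v₀h i = α * ((u₀ i) ^ 2 - β))
    (hv₁ : ∀ i, v₁h i = (2 * v₀h i + K) * u₀ i - f i)
    (hA : ∀ i, 0 < 2 * v₀h i + K)
    (hB : (-L + (2 : ℝ) • diagonal v₀h).PosDef) :
    (-L + diagonal (fun i => 6 * α * (u₀ i) ^ 2 - 2 * α * β)).PosDef := by
  have key : -L + diagonal (fun i => 6 * α * (u₀ i) ^ 2 - 2 * α * β)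
      = (-L + (2 : ℝ) • diagonal v₀h) + diagonal (fun i => 4 * α * (u₀ i) ^ 2) := by
    rw [add_assoc, ← diagonal_smul, diagonal_add, add_right_inj]
    refine congrArg _ (funext fun i => ?_)
    simp only [Pi.add_apply, Pi.smul_apply, smul_eq_mul, hv₀ i]
    ring
  rw [key]
  exact hB.add_posSemidef (posSemidef_diagonal_iff.mpr fun i =>
    by positivity)
end

section
/- Let α, β, K > 0, f ∈ ℝⁿ, L symmetric with K·I + L positive definite. Suppose v₀* ∈ ℝⁿ satisfies both 2v₀*ᵢ + K > 0 for all i and -L + 2·diag(v₀*) positive definite. Then the function v₁* ↦ J*(v₁*, v₀*) = (1/2)⟨v₁*, (K·I + L)⁻¹v₁*⟩ - (1/2)∑ᵢ(v₁*ᵢ + fᵢ)²/(2v₀*ᵢ + K) - (1/(2α))∑ᵢ(v₀*ᵢ)² - β∑ᵢ v₀*ᵢ is convex on ℝⁿ. -/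
/-!
With `M = K • 1 + L` and `D = diagonal (2 v₀* + K)`, the functional is, up to a constant,
`½ (vᵀ M⁻¹ v - (v + f)ᵀ D⁻¹ (v + f))`. For any matrix `A` and `a + b = 1`, the quadratic form
`q_A` satisfies `a q_A x + b q_A y - q_A (a x + b y) = a b q_A (x - y)`, and the shift by `f` does
not change this second difference, so convexity reduces to `D⁻¹ ⪯ M⁻¹` in the Loewner order. That
is the antitonicity of inversion on positive definite matrices, applied to `M ⪯ D`, which is the
hypothesis `-L + 2 • diagonal v₀* ⪰ 0`.
-/

open Matrix

namespace Matrix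

variable {ι : Type*} [Fintype ι]

theorem dotProduct_mulVec_smul_add_smul {R : Type*} [CommRing R] (A : Matrix ι ι R)
    (x y : ι → R) {a b : R} (hab : a + b = 1) :
    (a • x + b • y) ⬝ᵥ A *ᵥ (a • x + b • y) =
      a * (x ⬝ᵥ A *ᵥ x) + b * (y ⬝ᵥ A *ᵥ y) - a * b * ((x - y) ⬝ᵥ A *ᵥ (x - y)) := by
  obtain rfl : b = 1 - a := by rw [← hab]; ring
  simp only [mulVec_add, mulVec_sub, mulVec_smul, add_dotProduct, sub_dotProduct,
    dotProduct_add, dotProduct_sub, smul_dotProduct, dotProduct_smul, smul_eq_mul]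
  ring

theorem convexOn_dotProduct_mulVec_sub_dotProduct_mulVec_add {A B : Matrix ι ι ℝ}
    (hAB : (A - B).PosSemidef) (c : ι → ℝ) :
    ConvexOn ℝ Set.univ fun x => x ⬝ᵥ A *ᵥ x - (x + c) ⬝ᵥ B *ᵥ (x + c) := by
  refine ⟨convex_univ, fun x _ y _ a b ha hb hab => ?_⟩
  have hshift : a • x + b • y + c = a • (x + c) + b • (y + c) := by
    rw [smul_add, smul_add, add_add_add_comm, ← add_smul, hab, one_smul, add_assoc]
  have hgap : 0 ≤ (x - y) ⬝ᵥ (A - B) *ᵥ (x - y) := by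
    simpa using hAB.dotProduct_mulVec_nonneg (x - y)
  rw [sub_mulVec, dotProduct_sub] at hgap
  simp only [smul_eq_mul]
  rw [hshift, dotProduct_mulVec_smul_add_smul A x y hab,
    dotProduct_mulVec_smul_add_smul B _ _ hab, add_sub_add_right_eq_sub]
  nlinarith [mul_nonneg (mul_nonneg ha hb) hgap]

variable [DecidableEq ι]

theorem PosDef.posSemidef_inv_sub_inv {M D : Matrix ι ι ℝ} (hM : M.PosDef)
    (hDM : (D - M).PosSemidef) : (M⁻¹ - D⁻¹).PosSemidef := by
  have hD : D.PosDef := by simpa using hM.add_posSemidef hDM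
  have hMsymm : M⁻¹ᵀ = M⁻¹ := hM.isHermitian.inv
  refine .of_dotProduct_mulVec_nonneg (hM.isHermitian.inv.sub hD.isHermitian.inv) fun x => ?_
  -- Complete the square at `z = D⁻¹ x`: `0 ≤ (x - M z)ᵀ M⁻¹ (x - M z) = xᵀ M⁻¹ x - 2 xᵀ z + zᵀ M z`,
  -- and `zᵀ M z ≤ zᵀ D z = xᵀ z`.
  set z := D⁻¹ *ᵥ x
  have hDz : D *ᵥ z = x := by
    rw [mulVec_mulVec, mul_nonsing_inv _ ((isUnit_iff_isUnit_det _).1 hD.isUnit), one_mulVec]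
  have hMz : M⁻¹ *ᵥ (M *ᵥ z) = z := by
    rw [mulVec_mulVec, nonsing_inv_mul _ ((isUnit_iff_isUnit_det _).1 hM.isUnit), one_mulVec]
  have hsq : 0 ≤ (x - M *ᵥ z) ⬝ᵥ M⁻¹ *ᵥ (x - M *ᵥ z) := by
    simpa using hM.inv.posSemidef.dotProduct_mulVec_nonneg (x - M *ᵥ z)
  have hgap : 0 ≤ z ⬝ᵥ (D - M) *ᵥ z := by simpa using hDM.dotProduct_mulVec_nonneg z
  have hcross : (M *ᵥ z) ⬝ᵥ M⁻¹ *ᵥ x = x ⬝ᵥ z := by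
    rw [dotProduct_mulVec, ← mulVec_transpose, hMsymm, hMz, dotProduct_comm]
  rw [mulVec_sub, dotProduct_sub, sub_dotProduct, sub_dotProduct, hMz, hcross,
    dotProduct_comm (M *ᵥ z) z] at hsq
  rw [sub_mulVec, dotProduct_sub, hDz] at hgap
  simp only [star_trivial, sub_mulVec, dotProduct_sub]
  linarith [dotProduct_comm x z]

theorem dotProduct_inv_diagonal_mulVec_self {K : Type*} [Field K] {d : ι → K}
    (hd : ∀ i, d i ≠ 0) (x : ι → K) :
    x ⬝ᵥ (diagonal d)⁻¹ *ᵥ x = ∑ i, x i ^ 2 / d i := by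
  have hinv : (diagonal d)⁻¹ = diagonal d⁻¹ :=
    inv_eq_left_inv <| by simp [diagonal_mul_diagonal, hd]
  simp only [hinv, mulVec_diagonal, dotProduct, Pi.inv_apply]
  exact Finset.sum_congr rfl fun i _ => by ring

end Matrix

theorem dual_functional_convex_in_v1_general (n : ℕ) (α β K : ℝ)
    (f v₀s : Fin n → ℝ) (L : Matrix (Fin n) (Fin n) ℝ)
    (hpos : (K • (1 : Matrix (Fin n) (Fin n) ℝ) + L).PosDef)
    (hA : ∀ i, 0 < 2 * v₀s i + K)
    (hB : (-L + (2 : ℝ) • diagonal v₀s).PosDef) :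
    ConvexOn ℝ Set.univ (fun v₁s : Fin n → ℝ =>
      (1 / 2) * (v₁s ⬝ᵥ (K • (1 : Matrix (Fin n) (Fin n) ℝ) + L)⁻¹.mulVec v₁s)
      - (1 / 2) * ∑ i, (v₁s i + f i) ^ 2 / (2 * v₀s i + K)
      - (1 / (2 * α)) * ∑ i, (v₀s i) ^ 2 - β * ∑ i, v₀s i) := by
  set M := K • (1 : Matrix (Fin n) (Fin n) ℝ) + L
  set D := diagonal fun i => 2 * v₀s i + K
  have hDM : D - M = -L + (2 : ℝ) • diagonal v₀s := by
    ext i j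
    simp only [D, M, Matrix.sub_apply, Matrix.add_apply, Matrix.neg_apply, Matrix.smul_apply,
      diagonal_apply, one_apply, smul_eq_mul]
    split_ifs <;> ring
  have hconv := convexOn_dotProduct_mulVec_sub_dotProduct_mulVec_add
    (hpos.posSemidef_inv_sub_inv (hDM ▸ hB.posSemidef)) f
  refine ((hconv.smul (by norm_num : (0 : ℝ) ≤ 1 / 2)).add_const
    (-(1 / (2 * α)) * ∑ i, v₀s i ^ 2 - β * ∑ i, v₀s i)).congr fun v _ => ?_
  simp only [Pi.add_apply, smul_eq_mul, D, dotProduct_inv_diagonal_mulVec_self fun i => (hA i).ne']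
  ring

/-- If `2v₀*ᵢ + K > 0` for all `i` and `-L + 2·diag(v₀*)` is positive definite,
then `v₁* ↦ J*(v₁*,v₀*)` is convex on `ℝⁿ`. -/
theorem dual_functional_convex_in_v1 (n : ℕ) (α β K : ℝ)
    (hα : 0 < α) (hβ : 0 < β) (hK : 0 < K)
    (f v₀s : Fin n → ℝ) (L : Matrix (Fin n) (Fin n) ℝ) (hL : L.IsSymm)
    (hpos : (K • (1 : Matrix (Fin n) (Fin n) ℝ) + L).PosDef)
    (hA : ∀ i, 0 < 2 * v₀s i + K)
    (hB : (-L + (2 : ℝ) • diagonal v₀s).PosDef) :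
    ConvexOn ℝ Set.univ (fun v₁s : Fin n → ℝ =>
      (1 / 2) * (v₁s ⬝ᵥ (K • (1 : Matrix (Fin n) (Fin n) ℝ) + L)⁻¹.mulVec v₁s)
      - (1 / 2) * ∑ i, (v₁s i + f i) ^ 2 / (2 * v₀s i + K)
      - (1 / (2 * α)) * ∑ i, (v₀s i) ^ 2 - β * ∑ i, v₀s i) :=
  dual_functional_convex_in_v1_general n α β K f v₀s L hpos hA hB
end
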